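/- Let f: R^M → R be differentiable with L-Lipschitz gradient, v a random vector in R^M, η > 0, and w' = w - ηv. Then E[f(w')] ≤ f(w) - (η/2)‖∇f(w)‖² - (η/2 - η²L/2)‖E[v]‖² + (η²L/2)E[‖v - E[v]‖²] + (η/2)‖E[v] - ∇f(w)‖². -/

import Mathlib

/-!
The descent lemma `f (w - η v) ≤ f w - η ⟪∇f w, v⟫ + η² L ‖v‖² / 2` holds pointwise, so it
survives taking expectations, with `𝔼 ⟪∇f w, v⟫ = ⟪∇f w, 𝔼 v⟫`. The stated form then follows
from the bias-variance identity `𝔼 ‖v‖² = ‖𝔼 v‖² + 𝔼 ‖v - 𝔼 v‖²` and the polarization identity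
`2 ⟪∇f w, 𝔼 v⟫ = ‖∇f w‖² + ‖𝔼 v‖² - ‖𝔼 v - ∇f w‖²`.
-/

open MeasureTheory
open scoped RealInnerProductSpace

section GradientDescent

variable {E : Type*} [NormedAddCommGroup E] [InnerProductSpace ℝ E] [CompleteSpace E]
  {f : E → ℝ} {L : ℝ}

theorem hasDerivAt_comp_add_smul {x d : E} {t : ℝ} (hf : DifferentiableAt ℝ f (x + t • d)) :
    HasDerivAt (fun s : ℝ => f (x + s • d)) ⟪gradient f (x + t • d), d⟫ t := by
  have hline : HasDerivAt (fun s : ℝ => x + s • d) d t := by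
    simpa using ((hasDerivAt_id t).smul_const d).const_add x
  simpa only [Function.comp_def, InnerProductSpace.toDual_apply_apply] using
    hf.hasGradientAt.hasFDerivAt.comp_hasDerivAt t hline

/-- The descent lemma: along the segment, `t ↦ f (x + t • d) - t ⟪∇f x, d⟫ - L t² ‖d‖² / 2`
has derivative `⟪∇f (x + t • d) - ∇f x, d⟫ - L t ‖d‖² ≤ 0` for `t > 0`, so it is antitone. -/
theorem le_add_inner_gradient_add_of_norm_gradient_sub_le (hf : Differentiable ℝ f)
    (hL : ∀ x y, ‖gradient f x - gradient f y‖ ≤ L * ‖x - y‖) (x y : E) :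
    f y ≤ f x + ⟪gradient f x, y - x⟫ + L / 2 * ‖y - x‖ ^ 2 := by
  set d := y - x
  let φ : ℝ → ℝ := fun t => f (x + t • d) - t * ⟪gradient f x, d⟫ - L / 2 * t ^ 2 * ‖d‖ ^ 2
  let φ' : ℝ → ℝ := fun t =>
    ⟪gradient f (x + t • d) - gradient f x, d⟫ - L * t * ‖d‖ ^ 2
  have hderiv : ∀ t, HasDerivAt φ (φ' t) t := by
    intro t
    refine (((hasDerivAt_comp_add_smul (hf _)).sub
      ((hasDerivAt_id t).mul_const ⟪gradient f x, d⟫)).sub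
      (((hasDerivAt_pow 2 t).const_mul (L / 2)).mul_const (‖d‖ ^ 2))).congr_deriv ?_
    simp only [φ', inner_sub_left, Nat.cast_ofNat]
    ring
  have hφ'_nonpos : ∀ t ∈ interior (Set.Ici (0 : ℝ)), φ' t ≤ 0 := by
    intro t ht
    rw [interior_Ici, Set.mem_Ioi] at ht
    have hinner_le : ⟪gradient f (x + t • d) - gradient f x, d⟫ ≤ L * t * ‖d‖ ^ 2 :=
      calc _ ≤ ‖gradient f (x + t • d) - gradient f x‖ * ‖d‖ := real_inner_le_norm _ _
        _ ≤ L * ‖x + t • d - x‖ * ‖d‖ := by gcongr; exact hL _ _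
        _ = L * t * ‖d‖ ^ 2 := by
          rw [add_sub_cancel_left, norm_smul, Real.norm_of_nonneg ht.le]; ring
    simp only [φ']
    linarith
  have hanti : AntitoneOn φ (Set.Ici 0) :=
    antitoneOn_of_hasDerivWithinAt_nonpos (convex_Ici 0)
      (fun t _ => (hderiv t).continuousAt.continuousWithinAt)
      (fun t _ => (hderiv t).hasDerivWithinAt) hφ'_nonpos
  have h01 : φ 1 ≤ φ 0 := hanti Set.self_mem_Ici (Set.mem_Ici.2 zero_le_one) zero_le_one
  simp only [φ, one_smul, zero_smul, add_zero, add_sub_cancel, d] at h01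
  linarith

variable {Ω : Type*} [MeasurableSpace Ω] {μ : Measure Ω} [IsProbabilityMeasure μ] {v : Ω → E}

theorem integral_norm_sub_integral_sq (hv : Integrable v μ)
    (hv2 : Integrable (fun ω => ‖v ω‖ ^ 2) μ) :
    ∫ ω, ‖v ω - ∫ ω', v ω' ∂μ‖ ^ 2 ∂μ = ∫ ω, ‖v ω‖ ^ 2 ∂μ - ‖∫ ω, v ω ∂μ‖ ^ 2 := by
  set m := ∫ ω, v ω ∂μ
  have hinner : Integrable (fun ω => 2 * ⟪m, v ω⟫) μ := (hv.const_inner m).const_mul 2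
  calc ∫ ω, ‖v ω - m‖ ^ 2 ∂μ
      = ∫ ω, (‖v ω‖ ^ 2 - 2 * ⟪m, v ω⟫ + ‖m‖ ^ 2) ∂μ := by
        congr 1 with ω
        rw [norm_sub_sq_real, real_inner_comm]
    _ = ∫ ω, ‖v ω‖ ^ 2 ∂μ - ‖m‖ ^ 2 := by
        rw [integral_add (f := fun ω => ‖v ω‖ ^ 2 - 2 * ⟪m, v ω⟫) (hv2.sub hinner)
          (integrable_const _), integral_sub hv2 hinner, integral_const_mul, integral_inner hv,
          real_inner_self_eq_norm_sq]
        simp only [integral_const, probReal_univ, one_smul]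
        ring

theorem integral_comp_sub_smul_le (hf : Differentiable ℝ f)
    (hL : ∀ x y, ‖gradient f x - gradient f y‖ ≤ L * ‖x - y‖) (w : E) (η : ℝ)
    (hv : Integrable v μ) (hv2 : Integrable (fun ω => ‖v ω‖ ^ 2) μ)
    (hfv : Integrable (fun ω => f (w - η • v ω)) μ) :
    ∫ ω, f (w - η • v ω) ∂μ
      ≤ f w - η * ⟪gradient f w, ∫ ω, v ω ∂μ⟫ + η ^ 2 * L / 2 * ∫ ω, ‖v ω‖ ^ 2 ∂μ := by
  have hpointwise : ∀ ω, f (w - η • v ω)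
      ≤ f w - η * ⟪gradient f w, v ω⟫ + η ^ 2 * L / 2 * ‖v ω‖ ^ 2 := by
    intro ω
    have h := le_add_inner_gradient_add_of_norm_gradient_sub_le hf hL w (w - η • v ω)
    rw [sub_sub_cancel_left, inner_neg_right, norm_neg, real_inner_smul_right, norm_smul,
      Real.norm_eq_abs, mul_pow, sq_abs] at h
    linarith
  have hinner : Integrable (fun ω => η * ⟪gradient f w, v ω⟫) μ :=
    (hv.const_inner _).const_mul η
  have hlinear : Integrable (fun ω => f w - η * ⟪gradient f w, v ω⟫) μ :=
    (integrable_const _).sub hinner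
  calc ∫ ω, f (w - η • v ω) ∂μ
      ≤ ∫ ω, (f w - η * ⟪gradient f w, v ω⟫ + η ^ 2 * L / 2 * ‖v ω‖ ^ 2) ∂μ :=
        integral_mono hfv (hlinear.add (hv2.const_mul _)) hpointwise
    _ = _ := by
        rw [integral_add hlinear (hv2.const_mul _), integral_sub (integrable_const _) hinner,
          integral_const_mul, integral_const_mul, integral_inner hv]
        simp only [integral_const, probReal_univ, one_smul]

end GradientDescent

theorem one_round_progress_general
    {M : ℕ} {Ω : Type*} [MeasureSpace Ω] (μ : Measure Ω) [IsProbabilityMeasure μ]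
    (f : EuclideanSpace ℝ (Fin M) → ℝ) (L : ℝ)
    (hf : Differentiable ℝ f)
    (hL : ∀ w₁ w₂, ‖gradient f w₁ - gradient f w₂‖ ≤ L * ‖w₁ - w₂‖)
    (v : Ω → EuclideanSpace ℝ (Fin M))
    (hv : Integrable v μ)
    (hv2 : Integrable (fun ω => ‖v ω‖^2) μ)
    (w : EuclideanSpace ℝ (Fin M)) (η : ℝ)
    (w' : Ω → EuclideanSpace ℝ (Fin M))
    (hw' : ∀ ω, w' ω = w - η • v ω)
    (hfw' : Integrable (fun ω => f (w' ω)) μ) :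
    ∫ ω, f (w' ω) ∂μ
      ≤ f w - (η/2) * ‖gradient f w‖^2
        - (η/2 - η^2 * L / 2) * ‖∫ ω, v ω ∂μ‖^2
        + (η^2 * L / 2) * ∫ ω, ‖v ω - ∫ ω', v ω' ∂μ‖^2 ∂μ
        + (η/2) * ‖(∫ ω, v ω ∂μ) - gradient f w‖^2 := by
  obtain rfl : w' = fun ω => w - η • v ω := funext hw'
  have hdescent := integral_comp_sub_smul_le hf hL w η hv hv2 hfw'
  have hvariance := integral_norm_sub_integral_sq hv hv2
  have hpolarization := norm_sub_sq_real (∫ ω, v ω ∂μ) (gradient f w)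
  rw [real_inner_comm] at hpolarization
  rw [hvariance]
  linear_combination hdescent - (η / 2) * hpolarization

theorem one_round_progress
    {M : ℕ} {Ω : Type*} [MeasureSpace Ω] (μ : Measure Ω) [IsProbabilityMeasure μ]
    (f : EuclideanSpace ℝ (Fin M) → ℝ) (L : ℝ)
    (hf : Differentiable ℝ f)
    (hL : ∀ w₁ w₂, ‖gradient f w₁ - gradient f w₂‖ ≤ L * ‖w₁ - w₂‖)
    (v : Ω → EuclideanSpace ℝ (Fin M))
    (hv : Integrable v μ)
    (hv2 : Integrable (fun ω => ‖v ω‖^2) μ)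
    (w : EuclideanSpace ℝ (Fin M)) (η : ℝ) (hη : 0 < η)
    (w' : Ω → EuclideanSpace ℝ (Fin M))
    (hw' : ∀ ω, w' ω = w - η • v ω)
    (hfw' : Integrable (fun ω => f (w' ω)) μ) :
    ∫ ω, f (w' ω) ∂μ
      ≤ f w - (η/2) * ‖gradient f w‖^2
        - (η/2 - η^2 * L / 2) * ‖∫ ω, v ω ∂μ‖^2
        + (η^2 * L / 2) * ∫ ω, ‖v ω - ∫ ω', v ω' ∂μ‖^2 ∂μ
        + (η/2) * ‖(∫ ω, v ω ∂μ) - gradient f w‖^2 :=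
  one_round_progress_general μ f L hf hL v hv hv2 w η w' hw' hfw'
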